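/- arXiv:math/0406337 — 2 statements merged into one kernel-verified Lean document; each statement's English description precedes it below -/
import Mathlib

section
/- For every natural number n ≥ 1 and every natural number k, ∑_{m=0}^{k} t_m(n-1) / ((k-m+1/2)(m+n/2)) = ((n+1)/(k+(n+1)/2)) · ∑_{m=0}^{k} t_m(n-1)/(m+n/2), i.e. the left-hand side equals ((n+1)/(k+(n+1)/2)) · t_k(n). -/
/-!
Theorem 2 of the paper, `∑_{m ≤ k} t_m(n) / (k - m + 1/2) = (n + 1) t_k(n + 1)`, is proved by
induction on `n`. Unfolding `t_m(n + 1)` and exchanging the order of summation (associativity of the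
Cauchy product) turns the inductive step into a sum over `j ≤ k` of the corollary at level `n`, and
the corollary at level `n` follows from Theorem 2 at level `n` by the partial fraction
`1 / ((k - m + 1/2)(m + s)) = (1 / (k - m + 1/2) + 1 / (m + s)) / (k + s + 1/2)`.
-/

noncomputable def t : ℕ → ℕ → ℝ
  | _, 0 => 1
  | k, n + 1 => ∑ m ∈ Finset.range (k + 1), t m n / ((m : ℝ) + ((n : ℝ) + 1) / 2)

open Finset PowerSeries

theorem coeff_mul_mk_eq_sum_range {R : Type*} [CommSemiring R] (f : R⟦X⟧) (b : ℕ → R) (m : ℕ) :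
    coeff m (f * PowerSeries.mk b) = ∑ j ∈ range (m + 1), coeff j f * b (m - j) := by
  rw [coeff_mul, Nat.sum_antidiagonal_eq_sum_range_succ (fun i j => coeff i f * coeff j (.mk b))]
  simp only [coeff_mk]

theorem sum_range_partialSum_mul {R : Type*} [CommSemiring R] (c K : ℕ → R) (k : ℕ) :
    ∑ m ∈ range (k + 1), (∑ j ∈ range (m + 1), c j) * K (k - m) =
      ∑ j ∈ range (k + 1), ∑ i ∈ range (j + 1), c i * K (j - i) := by
  have := congrArg (coeff k) (mul_right_comm (PowerSeries.mk c) (.mk 1) (.mk K))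
  simpa only [coeff_mul_mk_eq_sum_range, coeff_mk, Pi.one_apply, mul_one] using this

theorem div_mul_eq_div_add_div_div {K : Type*} [Field K] (a : K) {x y : K} (hx : x ≠ 0)
    (hy : y ≠ 0) (hxy : x + y ≠ 0) : a / (x * y) = (a / x + a / y) / (x + y) := by
  field_simp
  ring

theorem sum_div_mul_eq_div (a : ℕ → ℝ) {s : ℝ} (hs : 0 < s) (k : ℕ) :
    ∑ m ∈ range (k + 1), a m / (((k : ℝ) - m + 1 / 2) * (m + s)) =
      (∑ m ∈ range (k + 1), a m / ((k : ℝ) - m + 1 / 2) + ∑ m ∈ range (k + 1), a m / (m + s)) /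
        (k + s + 1 / 2) := by
  rw [← sum_add_distrib, sum_div]
  refine sum_congr rfl fun m hm => ?_
  have hmk : (m : ℝ) ≤ k := by exact_mod_cast Nat.lt_succ_iff.mp (mem_range.mp hm)
  rw [show (k : ℝ) + s + 1 / 2 = (k - m + 1 / 2) + (m + s) by ring]
  exact div_mul_eq_div_add_div_div _ (by linarith) (by positivity) (by positivity)

theorem t_succ (n k : ℕ) :
    t k (n + 1) = ∑ m ∈ range (k + 1), t m n / ((m : ℝ) + ((n : ℝ) + 1) / 2) := by
  rw [t]

theorem sum_t_div_mul_eq_of_sum_t_div_eq {n k : ℕ}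
    (h : ∑ m ∈ range (k + 1), t m n / ((k : ℝ) - m + 1 / 2) = ((n : ℝ) + 1) * t k (n + 1)) :
    ∑ m ∈ range (k + 1), t m n / (((k : ℝ) - m + 1 / 2) * (m + ((n : ℝ) + 1) / 2)) =
      ((n : ℝ) + 2) / (k + ((n : ℝ) + 2) / 2) * t k (n + 1) := by
  rw [sum_div_mul_eq_div _ (by positivity), h, ← t_succ]
  ring

theorem sum_t_div_eq (n k : ℕ) :
    ∑ m ∈ range (k + 1), t m n / ((k : ℝ) - m + 1 / 2) = ((n : ℝ) + 1) * t k (n + 1) := by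
  induction n generalizing k with
  | zero =>
    simp only [t, Nat.cast_zero, zero_add, one_mul]
    rw [← sum_range_reflect (fun m : ℕ => 1 / ((m : ℝ) + 1 / 2))]
    refine sum_congr rfl fun m hm => ?_
    rw [Nat.add_sub_cancel, Nat.cast_sub (mem_range_succ_iff.mp hm)]
  | succ n ih =>
    let c j := t j n / ((j : ℝ) + ((n : ℝ) + 1) / 2)
    calc ∑ m ∈ range (k + 1), t m (n + 1) / ((k : ℝ) - m + 1 / 2)
        = ∑ m ∈ range (k + 1), (∑ j ∈ range (m + 1), c j) * (1 / (((k - m : ℕ) : ℝ) + 1 / 2)) :=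
          sum_congr rfl fun m hm => by
            rw [t_succ, Nat.cast_sub (mem_range_succ_iff.mp hm)]
            ring
      _ = ∑ j ∈ range (k + 1), ∑ i ∈ range (j + 1), c i * (1 / (((j - i : ℕ) : ℝ) + 1 / 2)) :=
          sum_range_partialSum_mul c (fun r : ℕ => 1 / ((r : ℝ) + 1 / 2)) k
      _ = ∑ j ∈ range (k + 1), ∑ i ∈ range (j + 1),
            t i n / (((j : ℝ) - i + 1 / 2) * (i + ((n : ℝ) + 1) / 2)) :=
          sum_congr rfl fun j _ => sum_congr rfl fun i hi => by
            rw [Nat.cast_sub (mem_range_succ_iff.mp hi), div_mul_div_comm, mul_one, mul_comm (_ + _)]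
      _ = ∑ j ∈ range (k + 1), ((n : ℝ) + 2) / (j + ((n : ℝ) + 2) / 2) * t j (n + 1) :=
          sum_congr rfl fun j _ => sum_t_div_mul_eq_of_sum_t_div_eq (ih j)
      _ = ((n + 1 : ℕ) + 1) * t k (n + 1 + 1) := by
          rw [t_succ (n + 1), mul_sum]
          refine sum_congr rfl fun j _ => ?_
          push_cast
          ring

/-- Corollary to **Theorem 2**: for `n ≥ 1` and every `k`,
`∑_{m=0}^{k} t_m(n-1) / ((k-m+1/2)(m+n/2))
  = ((n+1)/(k+(n+1)/2)) · ∑_{m=0}^{k} t_m(n-1)/(m+n/2)`. -/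
theorem arctan_power_theorem2_corollary (n : ℕ) (hn : 1 ≤ n) (k : ℕ) :
    ∑ m ∈ Finset.range (k + 1),
        t m (n - 1) / (((k : ℝ) - (m : ℝ) + 1 / 2) * ((m : ℝ) + (n : ℝ) / 2)) =
      (((n : ℝ) + 1) / ((k : ℝ) + ((n : ℝ) + 1) / 2)) *
        ∑ m ∈ Finset.range (k + 1), t m (n - 1) / ((m : ℝ) + (n : ℝ) / 2) := by
  obtain ⟨n, rfl⟩ := Nat.exists_eq_add_of_le' hn
  have h := sum_t_div_mul_eq_of_sum_t_div_eq (sum_t_div_eq n k)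
  rw [t_succ] at h
  rw [Nat.add_sub_cancel]
  push_cast
  convert h using 3 <;> ring
end

section
/- Fix a natural number n ≥ 1 and let f : ℝ → ℝ be defined by f(x) = (arctan(x)/x)^n for x ≠ 0 and f(0) = 1. Then for every natural number m, the (2m)-th iterated derivative of f at 0 equals (−1)^m · n! · (2m)! · t_m(n-1) / (2^n · (m + n/2)). -/
open PowerSeries Finset NNReal

section Evaluation

variable {R : Type*} [NormedCommRing R] {x : R}

theorem PowerSeries.coeff_mul_mul_pow (φ ψ : R⟦X⟧) (j : ℕ) :
    coeff j (φ * ψ) * x ^ j =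
      ∑ kl ∈ antidiagonal j, coeff kl.1 φ * x ^ kl.1 * (coeff kl.2 ψ * x ^ kl.2) := by
  rw [coeff_mul, sum_mul]
  refine sum_congr rfl fun kl hkl => ?_
  rw [← mem_antidiagonal.mp hkl, pow_add]
  ring

theorem PowerSeries.summable_norm_coeff_mul_mul_pow {φ ψ : R⟦X⟧}
    (hφ : Summable fun j => ‖coeff j φ * x ^ j‖) (hψ : Summable fun j => ‖coeff j ψ * x ^ j‖) :
    Summable fun j => ‖coeff j (φ * ψ) * x ^ j‖ := by
  simpa only [coeff_mul_mul_pow] using summable_norm_sum_mul_antidiagonal_of_summable_norm hφ hψ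

theorem PowerSeries.hasSum_coeff_mul_mul_pow [CompleteSpace R] {φ ψ : R⟦X⟧} {a b : R}
    (hφ : Summable fun j => ‖coeff j φ * x ^ j‖) (hψ : Summable fun j => ‖coeff j ψ * x ^ j‖)
    (ha : HasSum (fun j => coeff j φ * x ^ j) a) (hb : HasSum (fun j => coeff j ψ * x ^ j) b) :
    HasSum (fun j => coeff j (φ * ψ) * x ^ j) (a * b) := by
  rw [← ha.tsum_eq, ← hb.tsum_eq, tsum_mul_tsum_eq_tsum_sum_antidiagonal_of_summable_norm hφ hψ]
  simpa only [coeff_mul_mul_pow] using (summable_norm_coeff_mul_mul_pow hφ hψ).of_norm.hasSum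

theorem PowerSeries.summable_norm_coeff_pow_mul_pow {φ : R⟦X⟧}
    (hφ : Summable fun j => ‖coeff j φ * x ^ j‖) (n : ℕ) :
    Summable fun j => ‖coeff j (φ ^ n) * x ^ j‖ := by
  induction n with
  | zero =>
    refine summable_of_ne_finset_zero (s := {0}) fun j hj => ?_
    simp [coeff_one, mem_singleton.not.mp hj]
  | succ n ih => exact pow_succ φ n ▸ summable_norm_coeff_mul_mul_pow ih hφ

theorem PowerSeries.hasSum_coeff_pow_mul_pow [CompleteSpace R] {φ : R⟦X⟧} {a : R}
    (hφ : Summable fun j => ‖coeff j φ * x ^ j‖) (ha : HasSum (fun j => coeff j φ * x ^ j) a)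
    (n : ℕ) : HasSum (fun j => coeff j (φ ^ n) * x ^ j) (a ^ n) := by
  induction n with
  | zero =>
    convert hasSum_single (f := fun j => coeff j (φ ^ 0) * x ^ j) 0 fun j hj => by
      simp [coeff_one, hj]
    simp
  | succ n ih =>
    rw [pow_succ, pow_succ]
    exact hasSum_coeff_mul_mul_pow (summable_norm_coeff_pow_mul_pow hφ n) hφ ih ha

end Evaluation

theorem iteratedDeriv_zero_eq_factorial_mul_of_hasSum {a : ℕ → ℝ} {f : ℝ → ℝ} {r : ℝ≥0}
    (hr : 0 < r) (h : ∀ x : ℝ, |x| < r → HasSum (fun j => a j * x ^ j) (f x)) (j : ℕ) :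
    iteratedDeriv j f 0 = j.factorial * a j := by
  have hradius : (r : ENNReal) ≤ (FormalMultilinearSeries.ofScalars ℝ a).radius := by
    refine ENNReal.le_of_forall_nnreal_lt fun ρ hρ => ?_
    refine FormalMultilinearSeries.le_radius_of_tendsto _ (l := 0) ?_
    have hρ' : |(ρ : ℝ)| < r := by simpa using hρ
    simpa [FormalMultilinearSeries.ofScalars_norm] using
      (h ρ hρ').summable.tendsto_atTop_zero.norm
  have hp : HasFPowerSeriesOnBall f (FormalMultilinearSeries.ofScalars ℝ a) 0 r :=
    { r_le := hradius
      r_pos := by simpa using hr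
      hasSum := fun {y} hy => by
        simpa [FormalMultilinearSeries.ofScalars_apply_eq, mul_comm] using h y (by simpa using hy) }
  have hcoeff := congrFun (FormalMultilinearSeries.ofScalars_series_injective ℝ ℝ
    (hp.hasFPowerSeriesAt.eq_formalMultilinearSeries hp.analyticAt.hasFPowerSeriesAt)) j
  rw [hcoeff, mul_div_cancel₀ _ (by positivity)]

noncomputable def arctanDivCoeff (j : ℕ) : ℝ := if Even j then (-1) ^ (j / 2) / (j + 1) else 0

noncomputable def arctanDivSeries : ℝ⟦X⟧ := mk arctanDivCoeff

theorem arctanDivCoeff_two_mul (k : ℕ) : arctanDivCoeff (2 * k) = (-1) ^ k / (2 * k + 1) := by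
  rw [arctanDivCoeff, if_pos (even_two_mul k), Nat.mul_div_cancel_left k two_pos]
  push_cast
  rfl

theorem abs_arctanDivCoeff_le_one (j : ℕ) : |arctanDivCoeff j| ≤ 1 := by
  unfold arctanDivCoeff
  split_ifs
  · rw [abs_div, abs_pow, abs_neg, abs_one, one_pow, abs_of_pos (by positivity)]
    exact div_le_one_of_le₀ (by linarith [j.cast_nonneg (α := ℝ)]) (by positivity)
  · simp

theorem summable_norm_coeff_arctanDivSeries_mul_pow {x : ℝ} (hx : |x| < 1) :
    Summable fun j => ‖coeff j arctanDivSeries * x ^ j‖ := by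
  refine (summable_geometric_of_lt_one (abs_nonneg x) hx).of_nonneg_of_le (fun _ => norm_nonneg _)
    fun j => ?_
  rw [arctanDivSeries, coeff_mk, norm_mul, norm_pow, Real.norm_eq_abs, Real.norm_eq_abs]
  exact mul_le_of_le_one_left (by positivity) (abs_arctanDivCoeff_le_one j)

theorem hasSum_coeff_arctanDivSeries_mul_pow {x : ℝ} (hx : |x| < 1) :
    HasSum (fun j => coeff j arctanDivSeries * x ^ j)
      (if x = 0 then 1 else Real.arctan x / x) := by
  split_ifs with hx0
  · subst hx0
    convert hasSum_single (f := fun j => coeff j arctanDivSeries * 0 ^ j) 0 fun j hj => by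
      simp [zero_pow hj]
    simp [arctanDivSeries, arctanDivCoeff]
  · have hzero : ∀ j ∉ Set.range (2 * ·), coeff j arctanDivSeries * x ^ j = 0 := by
      rintro j hj
      have hodd : ¬ Even j := fun ⟨r, hr⟩ => hj ⟨r, by simp only; omega⟩
      simp [arctanDivSeries, arctanDivCoeff, hodd]
    refine ((mul_right_injective₀ two_ne_zero).hasSum_iff hzero).mp ?_
    refine ((Real.hasSum_arctan (by rwa [Real.norm_eq_abs])).div_const x).congr_fun fun k => ?_
    rw [Function.comp_apply, arctanDivSeries, coeff_mk, arctanDivCoeff_two_mul]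
    field_simp
    push_cast
    ring

theorem hasSum_coeff_arctanDivSeries_pow_mul_pow {x : ℝ} (hx : |x| < 1) (n : ℕ) :
    HasSum (fun j => coeff j (arctanDivSeries ^ n) * x ^ j)
      ((if x = 0 then 1 else Real.arctan x / x) ^ n) :=
  hasSum_coeff_pow_mul_pow (summable_norm_coeff_arctanDivSeries_mul_pow hx)
    (hasSum_coeff_arctanDivSeries_mul_pow hx) n

theorem coeff_derivative_X_mul_arctanDivSeries (j : ℕ) :
    coeff j (derivative ℝ (X * arctanDivSeries)) = if Even j then (-1) ^ (j / 2) else 0 := by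
  rw [coeff_derivative, coeff_succ_X_mul, arctanDivSeries, coeff_mk, arctanDivCoeff]
  split_ifs
  · field_simp
  · simp

theorem one_add_X_sq_mul_derivative_X_mul_arctanDivSeries :
    (1 + X ^ 2) * derivative ℝ (X * arctanDivSeries) = 1 := by
  ext j
  rw [add_mul, one_mul, map_add, coeff_X_pow_mul', coeff_derivative_X_mul_arctanDivSeries,
    coeff_one]
  rcases j with _ | _ | j
  · simp
  · simp
  · rw [if_pos (show 2 ≤ j + 1 + 1 by omega), if_neg (show j + 1 + 1 ≠ 0 by omega),
      show j + 1 + 1 - 2 = j by omega, coeff_derivative_X_mul_arctanDivSeries]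
    by_cases hj : Even j
    · simp [hj, show (j + 2) / 2 = j / 2 + 1 by omega, pow_succ]
    · simp [hj, parity_simps]

theorem one_add_X_sq_mul_derivative_X_mul_arctanDivSeries_pow (n : ℕ) :
    (1 + X ^ 2) * derivative ℝ ((X * arctanDivSeries) ^ (n + 1)) =
      (n + 1 : ℝ⟦X⟧) * (X * arctanDivSeries) ^ n := by
  rw [Derivation.leibniz_pow, Nat.add_sub_cancel, smul_eq_mul, nsmul_eq_mul,
    mul_left_comm, ← mul_assoc (1 + X ^ 2), mul_comm (1 + X ^ 2), mul_assoc,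
    one_add_X_sq_mul_derivative_X_mul_arctanDivSeries]
  push_cast
  ring

theorem coeff_X_mul_arctanDivSeries_pow (n j : ℕ) :
    coeff (n + j) ((X * arctanDivSeries) ^ n) = coeff j (arctanDivSeries ^ n) := by
  rw [mul_pow, add_comm, coeff_X_pow_mul]

theorem coeff_arctanDivSeries_pow_recurrence (n j : ℕ) :
    (n + j + 3 : ℝ) * coeff (j + 2) (arctanDivSeries ^ (n + 1)) +
        (n + j + 1) * coeff j (arctanDivSeries ^ (n + 1)) =
      (n + 1) * coeff (j + 2) (arctanDivSeries ^ n) := by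
  have h := congrArg (coeff (n + j + 2)) (one_add_X_sq_mul_derivative_X_mul_arctanDivSeries_pow n)
  rw [add_mul, one_mul, map_add, coeff_X_pow_mul, coeff_derivative, coeff_derivative,
    show (n : ℝ⟦X⟧) + 1 = C ((n : ℝ) + 1) by simp, coeff_C_mul,
    show n + j + 2 + 1 = n + 1 + (j + 2) by ring, show n + j + 1 = n + 1 + j by ring,
    show n + j + 2 = n + (j + 2) by ring, coeff_X_mul_arctanDivSeries_pow,
    coeff_X_mul_arctanDivSeries_pow, coeff_X_mul_arctanDivSeries_pow] at h
  push_cast at h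
  linear_combination h

theorem t_zero_left (n : ℕ) : t 0 n = 2 ^ n / n.factorial := by
  induction n with
  | zero => simp [t]
  | succ n ih =>
    rw [t, sum_range_one, ih, Nat.factorial_succ]
    push_cast
    field_simp
    ring

theorem t_succ_succ (k n : ℕ) :
    t (k + 1) (n + 1) = t k (n + 1) + t (k + 1) n / ((k + 1 : ℝ) + (n + 1 : ℝ) / 2) := by
  rw [t, t, sum_range_succ]
  push_cast
  rfl

theorem coeff_two_mul_arctanDivSeries_pow (n m : ℕ) :
    coeff (2 * m) (arctanDivSeries ^ (n + 1)) =
      (-1) ^ m * (n + 1).factorial * t m n / (2 ^ (n + 1) * ((m : ℝ) + (n + 1 : ℝ) / 2)) := by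
  induction n generalizing m with
  | zero =>
    rw [zero_add, pow_one, arctanDivSeries, coeff_mk, arctanDivCoeff_two_mul]
    simp only [t]
    push_cast
    field_simp
    ring
  | succ n ihn =>
    induction m with
    | zero =>
      rw [mul_zero, coeff_zero_eq_constantCoeff, map_pow, arctanDivSeries, constantCoeff_mk,
        show arctanDivCoeff 0 = 1 by simp [arctanDivCoeff], t_zero_left, Nat.factorial_succ]
      push_cast
      field_simp
      ring
    | succ m ihm =>
      have hrec := coeff_arctanDivSeries_pow_recurrence (n + 1) (2 * m)
      rw [ihm, show 2 * m + 2 = 2 * (m + 1) by ring, ihn] at hrec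
      rw [t_succ_succ]
      rw [Nat.factorial_succ (n + 1)] at hrec ⊢
      have hpos : (n + 1 + 2 * m + 3 : ℝ) ≠ 0 := by positivity
      apply mul_left_cancel₀ hpos
      push_cast at hrec ⊢
      linear_combination (norm := skip) hrec
      field_simp
      ring

/-- Equation (19) of the paper: for `f(x) = (arctan(x)/x)^n` (with `f(0) = 1`),
the `(2m)`-th derivative of `f` at `0` equals
`(−1)^m · n! · (2m)! · t_m(n-1) / (2^n · (m + n/2))`. -/
theorem arctan_power_derivatives (n : ℕ) (hn : 1 ≤ n)
    (f : ℝ → ℝ) (hf : ∀ x : ℝ, f x = if x = 0 then 1 else (Real.arctan x / x) ^ n)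
    (m : ℕ) :
    iteratedDeriv (2 * m) f 0 =
      (-1 : ℝ) ^ m * (Nat.factorial n : ℝ) * (Nat.factorial (2 * m) : ℝ) *
        t m (n - 1) / (2 ^ n * ((m : ℝ) + (n : ℝ) / 2)) := by
  obtain ⟨k, rfl⟩ : ∃ k, n = k + 1 := ⟨n - 1, by omega⟩
  have hsum (x : ℝ) (hx : |x| < (1 : ℝ≥0)) :
      HasSum (fun j => coeff j (arctanDivSeries ^ (k + 1)) * x ^ j) (f x) := by
    have hpow := hasSum_coeff_arctanDivSeries_pow_mul_pow (by simpa using hx) (k + 1)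
    rw [hf]
    split_ifs at hpow ⊢ <;> simpa using hpow
  rw [iteratedDeriv_zero_eq_factorial_mul_of_hasSum one_pos hsum,
    coeff_two_mul_arctanDivSeries_pow, Nat.add_sub_cancel]
  push_cast
  ring
end
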